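/- arXiv:2412.02951 — 7 statements merged into one kernel-verified Lean document; each statement's English description precedes it below -/
import Mathlib

section
/- Let Δt > 0, a_brake > 0 be real numbers, let v_e and V be real numbers with 0 ≤ v_e ≤ V, and let a be a real number with −a_brake ≤ a ≤ (V − a_brake·Δt − v_e)/Δt. Then (v_e + a·Δt)² + 2·a_brake·(v_e·Δt + (1/2)·a·Δt²) ≤ V². -/
/-- Core estimate: new kinetic term plus `2 a_brake` times one-step displacement
is bounded by `V²`. -/
theorem kinetic_displacement_estimate
    (Δt a_brake v_e V a : ℝ)
    (hdt : 0 < Δt) (hab : 0 < a_brake)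
    (hve : 0 ≤ v_e) (hveV : v_e ≤ V)
    (halo : -a_brake ≤ a) (hahi : a ≤ (V - a_brake * Δt - v_e) / Δt) :
    (v_e + a * Δt) ^ 2 + 2 * a_brake * (v_e * Δt + (1 / 2) * a * Δt ^ 2) ≤ V ^ 2 := by
  have h : a * Δt ≤ V - a_brake * Δt - v_e := (le_div_iff₀ hdt).mp hahi
  have h2 : 0 ≤ (a + a_brake) * Δt := mul_nonneg (by linarith) hdt.le
  have h1 : 0 ≤ V - a_brake * Δt - v_e - a * Δt := by linarith
  nlinarith [mul_nonneg h1 h2, mul_nonneg h1 (by linarith : (0:ℝ) ≤ V + v_e),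
    mul_nonneg h2 (mul_pos hab hdt).le]
end

section
/- Let Δt > 0 and a_brake_i > 0 be real numbers, let v_i ≥ 0 be a real number, and let a_i be a real number with a_i ≥ −a_brake_i and v_i + a_i·Δt ≥ 0. Then v_i·Δt + (1/2)·a_i·Δt² + (v_i + a_i·Δt)²/(2·a_brake_i) ≥ v_i²/(2·a_brake_i). -/
/-- A braking-limited object cannot move its stopping point backwards:
displacement plus the new stopping distance is at least the old stopping distance. -/
theorem stopping_point_monotone
    (Δt a_brake_i v_i a_i : ℝ)
    (hdt : 0 < Δt) (habi : 0 < a_brake_i)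
    (hvi : 0 ≤ v_i) (hai : a_i ≥ -a_brake_i) (hvi' : 0 ≤ v_i + a_i * Δt) :
    v_i * Δt + (1 / 2) * a_i * Δt ^ 2 + (v_i + a_i * Δt) ^ 2 / (2 * a_brake_i) ≥
      v_i ^ 2 / (2 * a_brake_i) := by
  rw [ge_iff_le, ← sub_nonneg]
  have h : v_i * Δt + (1 / 2) * a_i * Δt ^ 2 + (v_i + a_i * Δt) ^ 2 / (2 * a_brake_i) -
      v_i ^ 2 / (2 * a_brake_i)
      = Δt * (v_i + (v_i + a_i * Δt)) * (a_brake_i + a_i) / (2 * a_brake_i) := by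
    field_simp
    ring
  rw [h]
  have h1 : 0 ≤ v_i + (v_i + a_i * Δt) := by linarith
  have h2 : 0 ≤ a_brake_i + a_i := by linarith
  positivity
end

section
/- Let Δt > 0, a_brake > 0, a_brake_i > 0 be real numbers, let v_e ≥ 0, v_i ≥ 0, d_i ≥ 0 be real numbers, and set V = sqrt(2·a_brake·(d_i + v_i²/(2·a_brake_i))). Assume v_e ≤ V, let a be a real number with −a_brake ≤ a ≤ (V − a_brake·Δt − v_e)/Δt, and let a_i be a real number with a_i ≥ −a_brake_i and v_i + a_i·Δt ≥ 0. Define the new distance d' = d_i + (v_i·Δt + (1/2)·a_i·Δt²) − (v_e·Δt + (1/2)·a·Δt²). Then (v_e + a·Δt)² ≤ 2·a_brake·(d' + (v_i + a_i·Δt)²/(2·a_brake_i)); equivalently, the RSS clearance condition max(0, (v_e + a·Δt)²/(2·a_brake) − (v_i + a_i·Δt)²/(2·a_brake_i)) ≤ d' holds at the next time step whenever d' ≥ 0. -/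
set_option maxHeartbeats 1000000


/-- One-step preservation of the RSS obstacle-clearance condition (rule r2)
for a single leading vehicle object. -/
theorem rss_clearance_one_step_preserved
    (Δt a_brake a_brake_i v_e v_i d_i V a a_i d' : ℝ)
    (hdt : 0 < Δt) (hab : 0 < a_brake) (habi : 0 < a_brake_i)
    (hve : 0 ≤ v_e) (hvi : 0 ≤ v_i) (hdi : 0 ≤ d_i)
    (hV : V = Real.sqrt (2 * a_brake * (d_i + v_i ^ 2 / (2 * a_brake_i))))
    (hveV : v_e ≤ V)
    (halo : -a_brake ≤ a) (hahi : a ≤ (V - a_brake * Δt - v_e) / Δt)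
    (hai : a_i ≥ -a_brake_i) (hvi' : 0 ≤ v_i + a_i * Δt)
    (hd' : d' = d_i + (v_i * Δt + (1 / 2) * a_i * Δt ^ 2)
            - (v_e * Δt + (1 / 2) * a * Δt ^ 2)) :
    (v_e + a * Δt) ^ 2 ≤ 2 * a_brake * (d' + (v_i + a_i * Δt) ^ 2 / (2 * a_brake_i)) ∧
      (0 ≤ d' →
        max 0 ((v_e + a * Δt) ^ 2 / (2 * a_brake)
            - (v_i + a_i * Δt) ^ 2 / (2 * a_brake_i)) ≤ d') := by
  have hV2 : V ^ 2 = 2 * a_brake * (d_i + v_i ^ 2 / (2 * a_brake_i)) := by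
    rw [hV, sq, Real.mul_self_sqrt (by positivity)]
  have hW : v_e + (a + a_brake) * Δt ≤ V := by
    have h : a * Δt ≤ V - a_brake * Δt - v_e := (le_div_iff₀ hdt).mp hahi
    nlinarith
  have hWnn : 0 ≤ v_e + (a + a_brake) * Δt := by nlinarith
  have hW2 : (v_e + (a + a_brake) * Δt) ^ 2 ≤ V ^ 2 := pow_le_pow_left₀ hWnn hW 2
  -- step 1: object term monotonicity
  have step1 : v_i ^ 2 / (2 * a_brake_i)
      ≤ (v_i + a_i * Δt) ^ 2 / (2 * a_brake_i) + (v_i * Δt + (1 / 2) * a_i * Δt ^ 2) := by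
    rw [div_add' _ _ _ (by positivity), div_le_div_iff₀ (by positivity) (by positivity)]
    nlinarith [mul_nonneg (mul_nonneg (by linarith : (0:ℝ) ≤ a_i + a_brake_i) hdt.le)
      (by linarith : (0:ℝ) ≤ 2 * v_i + a_i * Δt)]
  have step2 : (v_e + a * Δt) ^ 2 ≤ V ^ 2 - 2 * a_brake * Δt * v_e - a_brake * a * Δt ^ 2 := by
    nlinarith [hW2, mul_nonneg (mul_nonneg hab.le (sq_nonneg Δt)) (by linarith : (0:ℝ) ≤ a + a_brake)]
  have hmain : (v_e + a * Δt) ^ 2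
      ≤ 2 * a_brake * (d' + (v_i + a_i * Δt) ^ 2 / (2 * a_brake_i)) := by
    have := mul_le_mul_of_nonneg_left step1 (by positivity : (0:ℝ) ≤ 2 * a_brake)
    rw [hd']; nlinarith [hV2, step2]
  refine ⟨hmain, fun hd0 => ?_⟩
  apply max_le hd0
  rw [sub_le_iff_le_add, div_le_iff₀ (by positivity : (0:ℝ) < 2 * a_brake)]
  nlinarith [hmain]
end

section
/- Let Δt > 0 and let a_brake, a_brake_i be real numbers with 0 < a_brake ≤ a_brake_i. Let v_e ≥ 0, v_i ≥ 0, d_i ≥ 0 be real numbers and set V = sqrt(2·a_brake·(d_i + v_i²/(2·a_brake_i))). Assume v_e ≤ V, let a be a real number with −a_brake ≤ a ≤ (V − a_brake·Δt − v_e)/Δt, and let a_i be a real number with a_i ≥ −a_brake_i and v_i + a_i·Δt ≥ 0. Then the new distance d' = d_i + (v_i·Δt + (1/2)·a_i·Δt²) − (v_e·Δt + (1/2)·a·Δt²) satisfies d' ≥ 0. -/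
set_option maxHeartbeats 1000000


/-- One-step preservation of collision avoidance (rule r1 with ε = 0)
for a single leading vehicle object: the new distance is nonnegative. -/
theorem collision_avoidance_one_step_preserved
    (Δt a_brake a_brake_i v_e v_i d_i V a a_i d' : ℝ)
    (hdt : 0 < Δt) (hab : 0 < a_brake) (habab : a_brake ≤ a_brake_i)
    (hve : 0 ≤ v_e) (hvi : 0 ≤ v_i) (hdi : 0 ≤ d_i)
    (hV : V = Real.sqrt (2 * a_brake * (d_i + v_i ^ 2 / (2 * a_brake_i))))
    (hveV : v_e ≤ V)
    (halo : -a_brake ≤ a) (hahi : a ≤ (V - a_brake * Δt - v_e) / Δt)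
    (hai : a_i ≥ -a_brake_i) (hvi' : 0 ≤ v_i + a_i * Δt)
    (hd' : d' = d_i + (v_i * Δt + (1 / 2) * a_i * Δt ^ 2)
            - (v_e * Δt + (1 / 2) * a * Δt ^ 2)) :
    0 ≤ d' := by
  have hB : 0 < a_brake_i := lt_of_lt_of_le hab habab
  have harg : 0 ≤ 2 * a_brake * (d_i + v_i ^ 2 / (2 * a_brake_i)) := by positivity
  have hV0 : 0 ≤ V := hV ▸ Real.sqrt_nonneg _
  have hV2 : V ^ 2 = 2 * a_brake * (d_i + v_i ^ 2 / (2 * a_brake_i)) := by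
    rw [hV, Real.sq_sqrt harg]
  have key : a_brake_i * V ^ 2 = 2 * a_brake * a_brake_i * d_i + a_brake * v_i ^ 2 := by
    field_simp at hV2; nlinarith [hV2]
  have ha' : a * Δt ≤ V - a_brake * Δt - v_e := by
    have := (div_le_div_iff_of_pos_right hdt).mpr hahi
    calc a * Δt = (a * Δt / Δt) * Δt := by field_simp
    _ ≤ ((V - a_brake * Δt - v_e) / Δt) * Δt := by
        apply mul_le_mul_of_nonneg_right _ hdt.le
        rw [mul_div_assoc, div_self hdt.ne', mul_one]; exact hahi
    _ = V - a_brake * Δt - v_e := by field_simp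
  set w := v_i + a_i * Δt with hwdef
  -- key inequality : T := 2*d_i + Δt*(v_i + w) + a_brake*Δt^2 - 2*V*Δt ≥ 0
  have hT : 0 ≤ 2 * d_i + Δt * (v_i + w) + a_brake * Δt ^ 2 - 2 * V * Δt := by
    rcases le_or_gt v_i (a_brake_i * Δt) with hcase | hcase
    · -- b*B*T = B*(V-b*Δt)^2 + b*B*Δt*w + b*v_i*(B*Δt - v_i) ≥ 0
      have h1 : 0 ≤ a_brake_i * (V - a_brake * Δt) ^ 2 :=
        mul_nonneg hB.le (sq_nonneg _)
      have h2 : 0 ≤ a_brake * a_brake_i * Δt * w := by positivity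
      have h3 : 0 ≤ a_brake * v_i * (a_brake_i * Δt - v_i) := by
        apply mul_nonneg (mul_nonneg hab.le hvi); linarith
      nlinarith [mul_pos hab hB, mul_pos (mul_pos hab hB) hdt]
    · -- case v_i > B*Δt; use sqrt b, sqrt B
      set sb := Real.sqrt a_brake with hsb
      set sB := Real.sqrt a_brake_i with hsB
      have hsb2 : sb ^ 2 = a_brake := Real.sq_sqrt hab.le
      have hsB2 : sB ^ 2 = a_brake_i := Real.sq_sqrt hB.le
      have hsb0 : 0 < sb := Real.sqrt_pos.mpr hab
      have hsB0 : 0 < sB := Real.sqrt_pos.mpr hB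
      have hsbB : sb ≤ sB := Real.sqrt_le_sqrt habab
      have hVv : sb * v_i ≤ sB * V := by
        nlinarith [mul_nonneg hsb0.le hvi, mul_nonneg hsB0.le hV0,
          mul_nonneg (mul_nonneg hab.le hB.le) hdi, key, hsb2, hsB2]
      clear hV hahi halo hd' hV2 harg ha' hve
      have hba : sB * a_brake ≤ sb * a_brake_i := by
        nlinarith [mul_nonneg (mul_nonneg hsb0.le hsB0.le) (sub_nonneg.mpr hsbB), hsb2, hsB2]
      have hchain : sb * (v_i - a_brake_i * Δt) ≤ sB * (V - a_brake * Δt) := by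
        have := mul_le_mul_of_nonneg_right hba hdt.le
        nlinarith
      have hrhs0 : 0 ≤ sb * (v_i - a_brake_i * Δt) :=
        mul_nonneg hsb0.le (by linarith)
      have hsq : a_brake * (v_i - a_brake_i * Δt) ^ 2
          ≤ a_brake_i * (V - a_brake * Δt) ^ 2 := by
        nlinarith [mul_le_mul hchain hchain hrhs0 (hrhs0.trans hchain)]
      have hs : 0 ≤ w - (v_i - a_brake_i * Δt) := by
        have : 0 ≤ (a_i + a_brake_i) * Δt := mul_nonneg (by linarith) hdt.le
        nlinarith
      -- b*B*T = B*(V-bΔt)^2 - b*(v_i-BΔt)^2 + b*B*Δt*(w - (v_i - BΔt))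
      have h2 : 0 ≤ a_brake * a_brake_i * Δt * (w - (v_i - a_brake_i * Δt)) := by
        positivity
      nlinarith [mul_pos hab hB]
  -- conclude
  have hs_ego : (1/2) * a * Δt ^ 2 ≤ (1/2) * Δt * (V - a_brake * Δt - v_e) := by
    nlinarith [mul_le_mul_of_nonneg_left ha' (le_of_lt (by positivity : (0:ℝ) < (1/2) * Δt))]
  have hobj : v_i * Δt + (1/2) * a_i * Δt ^ 2 = Δt * (v_i + w) / 2 := by
    rw [hwdef]; ring
  have hveV' : v_e * Δt ≤ V * Δt := mul_le_mul_of_nonneg_right hveV hdt.le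
  subst hd'
  rw [hobj]
  nlinarith [hT, hs_ego, hveV']
end

section
/- Let Δt > 0 and a_brake > 0 be real numbers, let v_e ≥ 0 and d_i ≥ 0 be real numbers and set V = sqrt(2·a_brake·d_i). Assume v_e ≤ V, let a be a real number with −a_brake ≤ a ≤ (V − a_brake·Δt − v_e)/Δt, and let δ ≥ 0 be a real number (the object's displacement away from the ego). Then the new distance d' = d_i + δ − (v_e·Δt + (1/2)·a·Δt²) satisfies both d' ≥ 0 and (v_e + a·Δt)² ≤ 2·a_brake·d'. -/
/-- One-step preservation of rules r1 (ε = 0) and r2 for a single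
non-vehicle object (e.g., a pedestrian). -/
theorem nonvehicle_one_step_preserved
    (Δt a_brake v_e d_i V a δ d' : ℝ)
    (hdt : 0 < Δt) (hab : 0 < a_brake)
    (hve : 0 ≤ v_e) (hdi : 0 ≤ d_i)
    (hV : V = Real.sqrt (2 * a_brake * d_i))
    (hveV : v_e ≤ V)
    (halo : -a_brake ≤ a) (hahi : a ≤ (V - a_brake * Δt - v_e) / Δt)
    (hδ : 0 ≤ δ)
    (hd' : d' = d_i + δ - (v_e * Δt + (1 / 2) * a * Δt ^ 2)) :
    0 ≤ d' ∧ (v_e + a * Δt) ^ 2 ≤ 2 * a_brake * d' := by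
  have hV0 : 0 ≤ V := hV ▸ Real.sqrt_nonneg _
  have hV2 : V ^ 2 = 2 * a_brake * d_i := by
    rw [hV, Real.sq_sqrt (by positivity)]
  have h1 : a * Δt ≤ V - a_brake * Δt - v_e := (le_div_iff₀ hdt).mp hahi
  have hlo : 0 ≤ (a + a_brake) * Δt :=
    mul_nonneg (by linarith) hdt.le
  -- key: (v_e + aΔt + a_brakeΔt)² ≤ V², since 0 ≤ v_e ≤ that ≤ V
  have hu : v_e ≤ v_e + a * Δt + a_brake * Δt := by nlinarith
  have hsq : (v_e + a * Δt + a_brake * Δt) ^ 2 ≤ V ^ 2 := by nlinarith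
  have hkey : (v_e + a * Δt) ^ 2 ≤ 2 * a_brake * d' := by
    rw [hd']; nlinarith [sq_nonneg (v_e + a * Δt),
      mul_le_mul_of_nonneg_left hu (mul_pos hab hdt).le]
  refine ⟨?_, hkey⟩
  nlinarith [sq_nonneg (v_e + a * Δt)]
end

section
/- (Lemma 1) Let Δt > 0, a_brake > 0, a_max > 0 be real numbers and let I be a nonempty finite index set of leading objects. For each i ∈ I let d_i ≥ 0 be the distance to object i, and let object i be either a vehicle, with speed v_i ≥ 0 and maximum braking rate a_brake_i ≥ a_brake, or a non-vehicle. Define c_i = max(0, v_e²/(2·a_brake) − v_i²/(2·a_brake_i)) and v_max_i = sqrt(2·a_brake·(d_i + v_i²/(2·a_brake_i))) for vehicle objects, and c_i = v_e²/(2·a_brake) and v_max_i = sqrt(2·a_brake·d_i) for non-vehicle objects, where v_e ≥ 0 is the ego speed. Set v_max = min over i ∈ I of v_max_i and let the ego apply the controller command a = min(a_max, (v_max − a_brake·Δt − v_e)/Δt). Assume rules r1 and r2 hold at the current step, i.e., for every i ∈ I: d_i ≥ 0 and c_i ≤ d_i. Over the time step, assume each vehicle object i applies an acceleration a_i with a_i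 ≥ −a_brake_i and v_i + a_i·Δt ≥ 0 and travels displacement δ_i = v_i·Δt + (1/2)·a_i·Δt², and each non-vehicle object travels a displacement δ_i ≥ 0. Let v_e' = v_e + a·Δt, v_i' = v_i + a_i·Δt for vehicles, d_i' = d_i + δ_i − (v_e·Δt + (1/2)·a·Δt²), and let c_i' be the required clearance computed from v_e', v_i', a_brake, a_brake_i (with the same vehicle/non-vehicle case split). Then for every i ∈ I: d_i' ≥ 0 and c_i' ≤ d_i', i.e., rules r1 (with ε = 0) and r2 have zero violation at the next time step. -/
/-! The command keeps the ego's next speed `u` at most `v_max - a_brake Δt`, so its next braking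
distance `u² / (2 a_brake)` plus the distance `x` it covers during the step is at most
`v_max² / (2 a_brake)`, which is `d_i` plus the lead's braking distance (zero for a non-vehicle).
That braking distance decreases by at most the lead's displacement `δ_i`, whence r2. For r1,
`x ≤ v_max Δt - a_brake Δt² / 2` is compared with the least displacement of a lead braking at
`a_brake_i`: if the lead stops within the step, the ego's parabola peaks below `d_i` plus the
lead's braking distance; otherwise the difference is a concave function of the time, controlled
at `0` and at the lead's stopping time. -/

section Kinematics

variable {v a B t : ℝ}

theorem half_mul_le_displacement (ht : 0 ≤ t) (hv' : 0 ≤ v + a * t) :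
    v * t / 2 ≤ v * t + 1 / 2 * a * t ^ 2 := by
  nlinarith [mul_nonneg hv' ht]

theorem sub_half_mul_sq_le_displacement (ha : -B ≤ a) :
    v * t - B * t ^ 2 / 2 ≤ v * t + 1 / 2 * a * t ^ 2 := by
  nlinarith [mul_nonneg (neg_le_iff_add_nonneg.1 ha) (sq_nonneg t)]

theorem sq_sub_two_mul_displacement_le (ha : -B ≤ a) (hδ : 0 ≤ v * t + 1 / 2 * a * t ^ 2) :
    v ^ 2 - 2 * B * (v * t + 1 / 2 * a * t ^ 2) ≤ (v + a * t) ^ 2 := by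
  nlinarith [mul_nonneg (neg_le_iff_add_nonneg.1 ha) hδ]

end Kinematics

theorem mul_sub_half_mul_sq_le_sq_div {b : ℝ} (hb : 0 < b) (s t : ℝ) :
    s * t - b * t ^ 2 / 2 ≤ s ^ 2 / (2 * b) := by
  rw [le_div_iff₀ (by positivity)]
  nlinarith [sq_nonneg (s - b * t)]

/- With `T = v / B`, the function `t ↦ d - (s - v) t - (B - b) t² / 2` is concave, nonnegative
at `t = 0`, and by `hs` equal to `(s - b T)² / (2 b) ≥ 0` at `t = T`; `key` is the resulting
interpolation, multiplied out. -/
theorem ego_displacement_le_gap_of_lt {b B t s v d : ℝ} (hb : 0 < b) (hbB : b ≤ B)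
    (ht : 0 ≤ t) (hd : 0 ≤ d) (hs : B * s ^ 2 = 2 * b * B * d + b * v ^ 2) (hvt : B * t < v) :
    s * t - b * t ^ 2 / 2 ≤ d + (v * t - B * t ^ 2 / 2) := by
  have key : 2 * b * B * v * (d + (v * t - B * t ^ 2 / 2) - (s * t - b * t ^ 2 / 2)) =
      t * (B * s - b * v) ^ 2 + 2 * b * B * (v - B * t) * d
        + b * (B - b) * t * v * (v - B * t) := by
    linear_combination (-t * B) * hs
  have hB : 0 < B := hb.trans_le hbB
  have hv : 0 < v := lt_of_le_of_lt (by positivity) hvt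
  have hvBt : 0 ≤ v - B * t := by linarith
  have hBb : 0 ≤ B - b := by linarith
  have hprod : 0 ≤ 2 * b * B * v * (d + (v * t - B * t ^ 2 / 2) - (s * t - b * t ^ 2 / 2)) := by
    rw [key]
    positivity
  exact sub_nonneg.1 ((mul_nonneg_iff_of_pos_left (by positivity)).1 hprod)

theorem ego_displacement_le_gap {b B t s v d δ : ℝ} (hb : 0 < b) (hbB : b ≤ B) (ht : 0 ≤ t)
    (hv : 0 ≤ v) (hd : 0 ≤ d) (hs : s ^ 2 = 2 * b * (d + v ^ 2 / (2 * B)))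
    (hδ₁ : v * t / 2 ≤ δ) (hδ₂ : v * t - B * t ^ 2 / 2 ≤ δ) :
    s * t - b * t ^ 2 / 2 ≤ d + δ := by
  have hB : 0 < B := hb.trans_le hbB
  rcases le_or_gt v (B * t) with hvt | hvt
  · have hstop : v ^ 2 / (2 * B) ≤ v * t / 2 := by
      rw [div_le_iff₀ (by positivity)]
      nlinarith [mul_le_mul_of_nonneg_left hvt hv]
    calc s * t - b * t ^ 2 / 2 ≤ s ^ 2 / (2 * b) := mul_sub_half_mul_sq_le_sq_div hb s t
      _ = d + v ^ 2 / (2 * B) := by rw [hs]; field_simp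
      _ ≤ d + δ := by linarith
  · have hs' : B * s ^ 2 = 2 * b * B * d + b * v ^ 2 := by
      rw [hs]; field_simp
    linarith [ego_displacement_le_gap_of_lt hb hbB ht hd hs' hvt]

section Controller

variable {Δt b a_max v_e vmax a : ℝ}

theorem ego_speed_le (hΔt : 0 < Δt) (ha : a = min a_max ((vmax - b * Δt - v_e) / Δt)) :
    v_e + a * Δt ≤ vmax - b * Δt := by
  have h : a * Δt ≤ vmax - b * Δt - v_e := (le_div_iff₀ hΔt).1 (ha ▸ min_le_right _ _)
  linarith

theorem ego_speed_nonneg_or_eq (hΔt : 0 < Δt) (ha_max : 0 < a_max) (hv_e : 0 ≤ v_e)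
    (ha : a = min a_max ((vmax - b * Δt - v_e) / Δt)) :
    0 ≤ v_e + a * Δt ∨ v_e + a * Δt = vmax - b * Δt := by
  rcases min_choice a_max ((vmax - b * Δt - v_e) / Δt) with h | h <;> rw [h] at ha <;> subst ha
  · exact Or.inl (by positivity)
  · exact Or.inr (by field_simp; ring)

theorem ego_stopping_distance_le (hΔt : 0 < Δt) (hb : 0 < b) (ha_max : 0 < a_max)
    (hv_e : 0 ≤ v_e) (hvmax : v_e ≤ vmax) (ha : a = min a_max ((vmax - b * Δt - v_e) / Δt)) :
    (v_e + a * Δt) ^ 2 / (2 * b) + (v_e * Δt + 1 / 2 * a * Δt ^ 2) ≤ vmax ^ 2 / (2 * b) := by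
  have hu := ego_speed_le hΔt ha
  have hmul : (v_e + a * Δt) * (v_e + a * Δt + b * Δt) ≤ (v_e + a * Δt) * vmax := by
    rcases ego_speed_nonneg_or_eq hΔt ha_max hv_e ha with hu0 | hueq
    · exact mul_le_mul_of_nonneg_left (by linarith) hu0
    · rw [hueq, sub_add_cancel]
  rw [div_add' _ _ _ (by positivity), div_le_div_iff_of_pos_right (by positivity)]
  have hstep : v_e + a * Δt + b * Δt ≤ vmax := by linarith
  nlinarith [mul_le_mul_of_nonneg_left hvmax (by positivity : 0 ≤ b * Δt),
    mul_le_mul_of_nonneg_left hstep (hv_e.trans hvmax)]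

theorem ego_displacement_le (hΔt : 0 < Δt) (hvmax : v_e ≤ vmax)
    (ha : a = min a_max ((vmax - b * Δt - v_e) / Δt)) :
    v_e * Δt + 1 / 2 * a * Δt ^ 2 ≤ vmax * Δt - b * Δt ^ 2 / 2 := by
  nlinarith [mul_le_mul_of_nonneg_left (ego_speed_le hΔt ha) hΔt.le]

end Controller

theorem le_sqrt_two_mul_of_sq_div_le {b w D : ℝ} (hb : 0 < b) (h : w ^ 2 / (2 * b) ≤ D) :
    w ≤ √(2 * b * D) :=
  Real.le_sqrt_of_sq_le (by rwa [div_le_iff₀ (by positivity), mul_comm] at h)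

theorem obstacle_step {b s d δ x u : ℝ} (hb : 0 < b) (hδ : 0 ≤ δ) (hd : 0 ≤ d)
    (hs : s = √(2 * b * d)) (hego : u ^ 2 / (2 * b) + x ≤ s ^ 2 / (2 * b)) :
    0 ≤ d + δ - x ∧ u ^ 2 / (2 * b) ≤ d + δ - x := by
  rw [hs, Real.sq_sqrt (by positivity), mul_div_cancel_left₀ _ (by positivity)] at hego
  have : 0 ≤ u ^ 2 / (2 * b) := by positivity
  constructor <;> linarith

theorem vehicle_step {b B Δt s v a d δ x u : ℝ} (hb : 0 < b) (hbB : b ≤ B) (hΔt : 0 ≤ Δt)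
    (hv : 0 ≤ v) (hd : 0 ≤ d) (ha : -B ≤ a) (hv' : 0 ≤ v + a * Δt)
    (hδ : δ = v * Δt + 1 / 2 * a * Δt ^ 2) (hs : s = √(2 * b * (d + v ^ 2 / (2 * B))))
    (hego : u ^ 2 / (2 * b) + x ≤ s ^ 2 / (2 * b)) (hx : x ≤ s * Δt - b * Δt ^ 2 / 2) :
    0 ≤ d + δ - x ∧ max 0 (u ^ 2 / (2 * b) - (v + a * Δt) ^ 2 / (2 * B)) ≤ d + δ - x := by
  have hB : 0 < B := hb.trans_le hbB
  have hs2 : s ^ 2 = 2 * b * (d + v ^ 2 / (2 * B)) := hs ▸ Real.sq_sqrt (by positivity)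
  have hδ₁ : v * Δt / 2 ≤ δ := hδ ▸ half_mul_le_displacement hΔt hv'
  have hgap : 0 ≤ d + δ - x := by
    linarith [ego_displacement_le_gap hb hbB hΔt hv hd hs2 hδ₁
      (hδ ▸ sub_half_mul_sq_le_displacement ha)]
  have hlead : v ^ 2 / (2 * B) - δ ≤ (v + a * Δt) ^ 2 / (2 * B) := by
    rw [le_div_iff₀ (by positivity), sub_mul, div_mul_cancel₀ _ (by positivity)]
    have hδ₀ : 0 ≤ δ := (by positivity : 0 ≤ v * Δt / 2).trans hδ₁
    nlinarith [sq_sub_two_mul_displacement_le ha (hδ ▸ hδ₀)]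
  rw [hs2, mul_div_cancel_left₀ _ (by positivity)] at hego
  exact ⟨hgap, max_le hgap (by linarith)⟩

/-- Lemma 1: one application of the controller preserves zero violation of
rules r1 (collision avoidance, ε = 0) and r2 (obstacle clearance) for all
leading objects, vehicles and non-vehicles alike. -/
theorem lemma1_r1_r2_one_step_preserved
    {ι : Type*} (I : Finset ι) (hI : I.Nonempty) (veh : ι → Bool)
    (Δt a_brake a_max v_e : ℝ)
    (hdt : 0 < Δt) (hab : 0 < a_brake) (hamax : 0 < a_max) (hve : 0 ≤ v_e)
    (d v abi ai δ : ι → ℝ)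
    -- current state: vehicle objects have nonnegative speed and braking rate ≥ a_brake
    (hv : ∀ i ∈ I, veh i = true → 0 ≤ v i)
    (habi : ∀ i ∈ I, veh i = true → a_brake ≤ abi i)
    -- required clearance and maximum permissible speed, case-wise
    (c vmaxi : ι → ℝ)
    (hc : ∀ i ∈ I, c i =
      if veh i then max 0 (v_e ^ 2 / (2 * a_brake) - v i ^ 2 / (2 * abi i))
      else v_e ^ 2 / (2 * a_brake))
    (hvmaxi : ∀ i ∈ I, vmaxi i =
      if veh i then Real.sqrt (2 * a_brake * (d i + v i ^ 2 / (2 * abi i)))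
      else Real.sqrt (2 * a_brake * d i))
    (vmax a : ℝ)
    (hvmax : vmax = I.inf' hI vmaxi)
    -- the controller command
    (ha : a = min a_max ((vmax - a_brake * Δt - v_e) / Δt))
    -- rules r1 and r2 hold at the current step
    (hd : ∀ i ∈ I, 0 ≤ d i)
    (hcd : ∀ i ∈ I, c i ≤ d i)
    -- object behavior over the time step
    (hai : ∀ i ∈ I, veh i = true → -abi i ≤ ai i ∧ 0 ≤ v i + ai i * Δt)
    (hδveh : ∀ i ∈ I, veh i = true → δ i = v i * Δt + (1 / 2) * ai i * Δt ^ 2)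
    (hδnon : ∀ i ∈ I, veh i = false → 0 ≤ δ i)
    -- next-step quantities
    (v_e' : ℝ) (hve' : v_e' = v_e + a * Δt)
    (v' d' c' : ι → ℝ)
    (hv' : ∀ i ∈ I, veh i = true → v' i = v i + ai i * Δt)
    (hd' : ∀ i ∈ I, d' i = d i + δ i - (v_e * Δt + (1 / 2) * a * Δt ^ 2))
    (hc' : ∀ i ∈ I, c' i =
      if veh i then max 0 (v_e' ^ 2 / (2 * a_brake) - v' i ^ 2 / (2 * abi i))
      else v_e' ^ 2 / (2 * a_brake)) :
    ∀ i ∈ I, 0 ≤ d' i ∧ c' i ≤ d' i := by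
  subst hve'
  have hv_e_le : ∀ i ∈ I, v_e ≤ vmaxi i := by
    intro i hi
    have hci := (hc i hi).symm.trans_le (hcd i hi)
    rw [hvmaxi i hi]
    split_ifs at hci ⊢
    · exact le_sqrt_two_mul_of_sq_div_le hab (by linarith [(le_max_right _ _).trans hci])
    · exact le_sqrt_two_mul_of_sq_div_le hab hci
  have hv_e_vmax : v_e ≤ vmax := hvmax ▸ Finset.le_inf' hI _ hv_e_le
  have hego := ego_stopping_distance_le hdt hab hamax hve hv_e_vmax ha
  have hx := ego_displacement_le hdt hv_e_vmax ha
  intro i hi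
  have hvmax_le : vmax ≤ vmaxi i := hvmax ▸ Finset.inf'_le _ hi
  have hego_i : _ ≤ vmaxi i ^ 2 / (2 * a_brake) := hego.trans (by gcongr; linarith)
  have hx_i : _ ≤ vmaxi i * Δt - a_brake * Δt ^ 2 / 2 := hx.trans (by gcongr)
  have hs := hvmaxi i hi
  rw [hd' i hi, hc' i hi]
  split_ifs at hs ⊢ with hveh
  · obtain ⟨hai₁, hai₂⟩ := hai i hi hveh
    rw [hv' i hi hveh]
    exact vehicle_step hab (habi i hi hveh) hdt.le (hv i hi hveh) (hd i hi) hai₁ hai₂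
      (hδveh i hi hveh) hs hego_i hx_i
  · exact obstacle_step hab (hδnon i hi (by simpa using hveh)) (hd i hi) hs hego_i
end

section
/- Let Δt > 0, a_brake > 0, a_max > 0 be real numbers and let I be a nonempty finite index set of leading vehicle objects with maximum braking rates a_brake_i ≥ a_brake. Let v_e : ℕ → ℝ (ego speed), and for each i ∈ I let d_i : ℕ → ℝ (distance), v_i : ℕ → ℝ (object speed), and a_i : ℕ → ℝ (object acceleration) be sequences satisfying, for every n: v_i(n) ≥ 0, a_i(n) ≥ −a_brake_i, v_i(n+1) = v_i(n) + a_i(n)·Δt ≥ 0, the ego applies the controller command a(n) = min(a_max, (v_max(n) − a_brake·Δt − v_e(n))/Δt) with v_max(n) = min over i of sqrt(2·a_brake·(d_i(n) + v_i(n)²/(2·a_brake_i))), v_e(n+1) = v_e(n) + a(n)·Δt ≥ 0, and d_i(n+1) = d_i(n) + (v_i(n)·Δt + (1/2)·a_i(n)·Δt²) − (v_e(n)·Δt + (1/2)·a(n)·Δt²). Assume at time 0: v_e(0) ≥ 0 and, for every i ∈ I, d_i(0) ≥ 0 and max(0, v_e(0)²/(2·a_brake) − v_i(0)²/(2·a_brake_i))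 ≤ d_i(0). Then for every n ∈ ℕ and every i ∈ I: d_i(n) ≥ 0 and max(0, v_e(n)²/(2·a_brake) − v_i(n)²/(2·a_brake_i)) ≤ d_i(n), i.e., rules r1 (with ε = 0) and r2 have zero violation at every time step of the realization. -/
/-!
Safety is the invariant `v_e ≤ √(2·a_brake·(d_i + v_i²/(2·a_brake_i)))` for every object: the ego
could still stop, braking at `a_brake`, behind the point where object `i` stops under full
braking. The controller keeps `v_e(n+1) + a_brake·Δt` below that speed, which is exactly what is
needed for the ego's stopping point to stay behind the object's, whose stopping point never moves
backwards. For `d_i(n+1) ≥ 0` one compares the ego with a virtual ego braking at `a_brake` from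
the safe speed: after one step its remaining braking distance still dominates the object's,
because `a_brake ≤ a_brake_i`.
-/

noncomputable section

def brakingDistance (c v : ℝ) : ℝ := v ^ 2 / (2 * c)

def displacement (v acc t : ℝ) : ℝ := v * t + 1 / 2 * acc * t ^ 2

def safeSpeed (b β D w : ℝ) : ℝ := Real.sqrt (2 * b * (D + brakingDistance β w))

def command (amax vm b t u : ℝ) : ℝ := min amax ((vm - b * t - u) / t)

end

lemma brakingDistance_nonneg {c : ℝ} (hc : 0 ≤ c) (v : ℝ) : 0 ≤ brakingDistance c v := by
  unfold brakingDistance; positivity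

lemma brakingDistance_le_brakingDistance {c v v' : ℝ} (hc : 0 ≤ c) (hv : 0 ≤ v) (h : v ≤ v') :
    brakingDistance c v ≤ brakingDistance c v' := by
  unfold brakingDistance; gcongr

lemma brakingDistance_eq_displacement_add {c : ℝ} (hc : c ≠ 0) (v t : ℝ) :
    brakingDistance c v = displacement v (-c) t + brakingDistance c (v - c * t) := by
  unfold brakingDistance displacement; field_simp; ring

lemma displacement_mono_acc {v acc acc' t : ℝ} (h : acc ≤ acc') :
    displacement v acc t ≤ displacement v acc' t := by
  unfold displacement; nlinarith [sq_nonneg t]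

lemma displacement_eq_mul_add {v acc t : ℝ} :
    displacement v acc t = t * (v + (v + acc * t)) / 2 := by
  unfold displacement; ring

lemma brakingDistance_le_displacement_add {β w α t : ℝ} (hβ : 0 < β) (ht : 0 ≤ t)
    (hw : 0 ≤ w) (hw' : 0 ≤ w + α * t) (hα : -β ≤ α) :
    brakingDistance β w ≤ displacement w α t + brakingDistance β (w + α * t) := by
  rw [← sub_nonneg]
  have hdiff : displacement w α t + brakingDistance β (w + α * t) - brakingDistance β w =
      t * (w + (w + α * t)) * (β + α) / (2 * β) := by
    unfold brakingDistance displacement; field_simp; ring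
  rw [hdiff]
  exact div_nonneg (mul_nonneg (mul_nonneg ht (by linarith)) (by linarith)) (by positivity)

lemma brakingDistance_sub_mul_le {b β t w s : ℝ} (hb : 0 < b) (hbβ : b ≤ β) (ht : 0 ≤ t)
    (hw : β * t ≤ w) (hs : b * t ≤ s) (h : brakingDistance β w ≤ brakingDistance b s) :
    brakingDistance β (w - β * t) ≤ brakingDistance b (s - b * t) := by
  have hβ : 0 < β := hb.trans_le hbβ
  obtain ⟨p, hp, rfl⟩ : ∃ p, 0 ≤ p ∧ w = p + β * t := ⟨w - β * t, by linarith, by ring⟩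
  obtain ⟨q, hq, rfl⟩ : ∃ q, 0 ≤ q ∧ s = q + b * t := ⟨s - b * t, by linarith, by ring⟩
  unfold brakingDistance at *
  rw [add_sub_cancel_right, add_sub_cancel_right]
  rw [div_le_div_iff₀ (by positivity) (by positivity)] at *
  -- If `q²β < p²b` then `q < p`, and all three terms of
  -- `(q + bt)²β - (p + βt)²b = (q²β - p²b) + 2bβt(q - p) + bβt²(b - β)` are negative.
  by_contra! hlt
  have hqp : q < p := by
    refine lt_of_pow_lt_pow_left₀ 2 hp (lt_of_mul_lt_mul_right ?_ hβ.le)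
    nlinarith [mul_le_mul_of_nonneg_left hbβ (sq_nonneg p)]
  nlinarith [mul_le_mul_of_nonneg_left hbβ (mul_nonneg (mul_nonneg hb.le hβ.le) (sq_nonneg t)),
    mul_le_mul_of_nonneg_left hqp.le (by positivity : 0 ≤ b * t * β)]

lemma brakingDistance_sub_displacement_le {b β t w α s : ℝ} (hb : 0 < b) (hbβ : b ≤ β)
    (ht : 0 ≤ t) (hw : 0 ≤ w) (hw' : 0 ≤ w + α * t) (hα : -β ≤ α) (hs : b * t ≤ s)
    (h : brakingDistance β w ≤ brakingDistance b s) :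
    brakingDistance β w - displacement w α t ≤ brakingDistance b (s - b * t) := by
  have hβ : 0 < β := hb.trans_le hbβ
  rcases le_or_gt w (β * t) with hstop | hmoving
  -- an object slow enough to be able to stop within the step covers its whole braking distance
  · have hdisp : brakingDistance β w ≤ displacement w α t := by
      rw [displacement_eq_mul_add]
      unfold brakingDistance
      rw [div_le_iff₀ (by positivity)]
      nlinarith [mul_le_mul_of_nonneg_left hstop hw]
    linarith [brakingDistance_nonneg hb.le (s - b * t)]
  · calc brakingDistance β w - displacement w α t
        ≤ brakingDistance β w - displacement w (-β) t := by
          linarith [displacement_mono_acc (v := w) (t := t) hα]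
      _ = brakingDistance β (w - β * t) := by
          rw [brakingDistance_eq_displacement_add hβ.ne' w t]; ring
      _ ≤ brakingDistance b (s - b * t) :=
          brakingDistance_sub_mul_le hb hbβ ht hmoving.le hs h

lemma displacement_le_of_add_mul_le {b t u a s : ℝ} (ht : 0 ≤ t) (ha : -b ≤ a)
    (h : u + a * t + b * t ≤ s) : displacement u a t ≤ displacement s (-b) t := by
  unfold displacement
  nlinarith [mul_le_mul_of_nonneg_left h ht,
    mul_nonneg (sq_nonneg t) (neg_le_iff_add_nonneg.1 ha)]

lemma brakingDistance_add_displacement_le {b u a t : ℝ} (hb : 0 < b) (ha : -b ≤ a) :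
    brakingDistance b (u + a * t) + displacement u a t ≤
      brakingDistance b (u + a * t + b * t) := by
  unfold brakingDistance displacement
  rw [← sub_nonneg]
  have hdiff : (u + a * t + b * t) ^ 2 / (2 * b) - ((u + a * t) ^ 2 / (2 * b) +
      (u * t + 1 / 2 * a * t ^ 2)) = (a + b) * t ^ 2 / 2 := by
    field_simp; ring
  rw [hdiff]
  have : 0 ≤ a + b := by linarith
  positivity

lemma brakingDistance_safeSpeed {b β D w : ℝ} (hb : 0 < b)
    (hP : 0 ≤ D + brakingDistance β w) :
    brakingDistance b (safeSpeed b β D w) = D + brakingDistance β w := by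
  unfold safeSpeed
  rw [brakingDistance, Real.sq_sqrt (by positivity)]
  field_simp

lemma le_safeSpeed_iff {b β D w u : ℝ} (hb : 0 < b) (hβ : 0 ≤ β) (hD : 0 ≤ D)
    (hu : 0 ≤ u) :
    u ≤ safeSpeed b β D w ↔ brakingDistance b u - brakingDistance β w ≤ D := by
  have hP : 0 ≤ D + brakingDistance β w := add_nonneg hD (brakingDistance_nonneg hβ w)
  rw [safeSpeed, Real.le_sqrt hu (by positivity), sub_le_iff_le_add]
  unfold brakingDistance
  rw [div_le_iff₀ (by positivity)]
  constructor <;> intro h <;> linarith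

section SafeStep

variable {b β t D w α u a : ℝ} (hb : 0 < b) (hbβ : b ≤ β) (ht : 0 ≤ t)
  (hw : 0 ≤ w) (hw' : 0 ≤ w + α * t) (hα : -β ≤ α) (ha : -b ≤ a) (hD : 0 ≤ D)
  (hu' : 0 ≤ u + a * t) (hcmd : u + a * t + b * t ≤ safeSpeed b β D w)
include hb hbβ ht hw hw' hα ha hD hu' hcmd

lemma safe_step_distance_nonneg :
    0 ≤ D + displacement w α t - displacement u a t := by
  set s := safeSpeed b β D w
  have hβ : 0 < β := hb.trans_le hbβ
  have hs : brakingDistance b s = D + brakingDistance β w :=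
    brakingDistance_safeSpeed hb (add_nonneg hD (brakingDistance_nonneg hβ.le w))
  have hobj := brakingDistance_sub_displacement_le hb hbβ ht hw hw' hα (s := s) (by linarith)
    (by linarith)
  have hego := displacement_le_of_add_mul_le ht ha hcmd
  linarith [brakingDistance_eq_displacement_add hb.ne' s t]

lemma safe_step_le_safeSpeed :
    u + a * t ≤ safeSpeed b β (D + displacement w α t - displacement u a t) (w + α * t) := by
  have hβ : 0 < β := hb.trans_le hbβ
  rw [le_safeSpeed_iff hb hβ.le (safe_step_distance_nonneg hb hbβ ht hw hw' hα ha hD hu' hcmd) hu']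
  have hs : brakingDistance b (safeSpeed b β D w) = D + brakingDistance β w :=
    brakingDistance_safeSpeed hb (add_nonneg hD (brakingDistance_nonneg hβ.le w))
  have hmono := brakingDistance_le_brakingDistance hb.le
    (add_nonneg hu' (mul_nonneg hb.le ht)) hcmd
  linarith [brakingDistance_add_displacement_le (u := u) (t := t) hb ha,
    brakingDistance_le_displacement_add hβ ht hw hw' hα]

lemma safe_step :
    0 ≤ D + displacement w α t - displacement u a t ∧
      u + a * t ≤ safeSpeed b β (D + displacement w α t - displacement u a t) (w + α * t) :=
  ⟨safe_step_distance_nonneg hb hbβ ht hw hw' hα ha hD hu' hcmd,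
    safe_step_le_safeSpeed hb hbβ ht hw hw' hα ha hD hu' hcmd⟩

end SafeStep

lemma add_command_mul_add_le {amax vm b t u : ℝ} (ht : 0 < t) :
    u + command amax vm b t u * t + b * t ≤ vm := by
  have h := (mul_le_mul_of_nonneg_right (min_le_right amax ((vm - b * t - u) / t)) ht.le)
  rw [div_mul_cancel₀ _ ht.ne'] at h
  unfold command
  linarith

lemma neg_le_command {amax vm b t u : ℝ} (ht : 0 < t) (hamax : -b ≤ amax) (hu : u ≤ vm) :
    -b ≤ command amax vm b t u :=
  le_min hamax (by rw [le_div_iff₀ ht]; linarith)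

/-- Multi-step invariance: iterating Lemma 1 along a realization, rules r1
(ε = 0) and r2 have zero violation at every time step, for leading vehicle
objects under the controller. -/
theorem r1_r2_invariant_along_realization
    {ι : Type*} (I : Finset ι) (hI : I.Nonempty)
    (Δt a_brake a_max : ℝ) (abi : ι → ℝ)
    (hdt : 0 < Δt) (hab : 0 < a_brake) (hamax : 0 < a_max)
    (habi : ∀ i ∈ I, a_brake ≤ abi i)
    (ve a vmax : ℕ → ℝ) (d v ai : ι → ℕ → ℝ)
    -- object behavior: nonnegative speed, braking-limited acceleration, dynamics
    (hv : ∀ i ∈ I, ∀ n, 0 ≤ v i n)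
    (hai : ∀ i ∈ I, ∀ n, -abi i ≤ ai i n)
    (hvdyn : ∀ i ∈ I, ∀ n, v i (n + 1) = v i n + ai i n * Δt)
    -- the controller command
    (hvmax : ∀ n, vmax n =
      I.inf' hI fun i => Real.sqrt (2 * a_brake * (d i n + v i n ^ 2 / (2 * abi i))))
    (ha : ∀ n, a n = min a_max ((vmax n - a_brake * Δt - ve n) / Δt))
    -- ego dynamics
    (hvedyn : ∀ n, ve (n + 1) = ve n + a n * Δt)
    (hvepos : ∀ n, 0 ≤ ve (n + 1))
    -- distance dynamics
    (hddyn : ∀ i ∈ I, ∀ n, d i (n + 1) =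
      d i n + (v i n * Δt + (1 / 2) * ai i n * Δt ^ 2)
        - (ve n * Δt + (1 / 2) * a n * Δt ^ 2))
    -- initial conditions: rules r1 and r2 hold at time 0
    (hve0 : 0 ≤ ve 0)
    (hd0 : ∀ i ∈ I, 0 ≤ d i 0)
    (hc0 : ∀ i ∈ I,
      max 0 (ve 0 ^ 2 / (2 * a_brake) - v i 0 ^ 2 / (2 * abi i)) ≤ d i 0) :
    ∀ n, ∀ i ∈ I, 0 ≤ d i n ∧
      max 0 (ve n ^ 2 / (2 * a_brake) - v i n ^ 2 / (2 * abi i)) ≤ d i n := by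
  have hve : ∀ n, 0 ≤ ve n := fun n => by cases n; exacts [hve0, hvepos _]
  have habi0 : ∀ i ∈ I, 0 ≤ abi i := fun i hi => hab.le.trans (habi i hi)
  suffices inv : ∀ n, ∀ i ∈ I, 0 ≤ d i n ∧ ve n ≤ safeSpeed a_brake (abi i) (d i n) (v i n) by
    intro n i hi
    obtain ⟨hd, hsafe⟩ := inv n i hi
    exact ⟨hd, max_le hd ((le_safeSpeed_iff hab (habi0 i hi) hd (hve n)).1 hsafe)⟩
  intro n
  induction n with
  | zero =>
    intro i hi
    exact ⟨hd0 i hi,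
      (le_safeSpeed_iff hab (habi0 i hi) (hd0 i hi) hve0).2 (le_of_max_le_right (hc0 i hi))⟩
  | succ n ih =>
    have hvm : ve n ≤ vmax n := hvmax n ▸ Finset.le_inf' hI _ fun i hi => (ih i hi).2
    have hcmd : ve n + a n * Δt + a_brake * Δt ≤ vmax n := ha n ▸ add_command_mul_add_le hdt
    have ha_lb : -a_brake ≤ a n := ha n ▸ neg_le_command hdt (by linarith) hvm
    intro i hi
    have hvm_i : vmax n ≤ safeSpeed a_brake (abi i) (d i n) (v i n) :=
      hvmax n ▸ Finset.inf'_le _ hi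
    have hv' := hvdyn i hi n ▸ hv i hi (n + 1)
    have hve' := hvedyn n ▸ hvepos n
    rw [hddyn i hi, hvdyn i hi, hvedyn]
    exact safe_step hab (habi i hi) hdt.le (hv i hi n) hv' (hai i hi n) ha_lb (ih i hi).1 hve'
      (hcmd.trans hvm_i)
end
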